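/- arXiv:1203.0780 — 2 statements merged into one kernel-verified Lean document; each statement's English description precedes it below -/
import Mathlib

section
/- (Lemma: liveness of the merge of two live sessions.) Let p be a role, T1 and T2 session types such that T1⊕T2 is a session type, and Δ1, Δ2 sessions on the same domain not containing p. If {p:T1} ⊎ Δ1 and {p:T2} ⊎ Δ2 are live sessions and the merge Δ1⋈Δ2 is defined, then {p : T1⊕T2} ⊎ (Δ1⋈Δ2) is a live session. -/
namespace MultiPartySessions

/-- An interaction: a finite nonempty set of senders, a receiver not among them,
and a message type. -/
structure Interaction (R M : Type*) where
  senders : Finset R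
  receiver : R
  msg : M
  senders_nonempty : senders.Nonempty
  receiver_not_mem : receiver ∉ senders

/-- A trace is a finite list of interactions. -/
abbrev Trace (R M : Type*) := List (Interaction R M)

/-- A language is a set of traces. -/
abbrev Lang (R M : Type*) := Set (Trace R M)

variable {R M V : Type*}

/-- Permutation closure of a language. -/
def perm (L : Lang R M) : Lang R M := {w | ∃ v ∈ L, w.Perm v}

/-- A language of traces is well formed if whenever φ·(π→p:a)·(π'→p':b)·ψ belongs to it,
either p ∈ π' ∪ {p'} or the trace with the two interactions swapped also belongs to it. -/
def WellFormedL (L : Lang R M) : Prop :=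
  ∀ (φ ψ : Trace R M) (α β : Interaction R M),
    (φ ++ α :: β :: ψ) ∈ L →
    (α.receiver ∈ β.senders ∨ α.receiver = β.receiver) ∨ (φ ++ β :: α :: ψ) ∈ L

/-- The smallest well-formed superset of a language. -/
def closure (L : Lang R M) : Lang R M :=
  {w | ∀ K : Lang R M, L ⊆ K → WellFormedL K → w ∈ K}

/-- `IsShuffle v₁ v₂ w` holds iff `w` is an interleaving of `v₁` and `v₂`. -/
inductive IsShuffle {α : Type*} : List α → List α → List α → Prop
  | nil : IsShuffle [] [] []
  | left {a : α} {l₁ l₂ l : List α} : IsShuffle l₁ l₂ l → IsShuffle (a :: l₁) l₂ (a :: l)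
  | right {a : α} {l₁ l₂ l : List α} : IsShuffle l₁ l₂ l → IsShuffle l₁ (a :: l₂) (a :: l)

/-- Shuffle of two languages. -/
def shuffleL (L₁ L₂ : Lang R M) : Lang R M :=
  {w | ∃ v₁ ∈ L₁, ∃ v₂ ∈ L₂, IsShuffle v₁ v₂ w}

/-- Elementwise concatenation of two languages. -/
def catL (L₁ L₂ : Lang R M) : Lang R M :=
  {w | ∃ v₁ ∈ L₁, ∃ v₂ ∈ L₂, w = v₁ ++ v₂}

/-- Kleene star of a language. -/
def starL (L : Lang R M) : Lang R M :=
  {w | ∃ vs : List (Trace R M), w = vs.flatten ∧ ∀ v ∈ vs, v ∈ L}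

/-- Global types. -/
inductive GlobalType (R M : Type*) where
  | skip
  | act (α : Interaction R M)
  | seq (g₁ g₂ : GlobalType R M)
  | par (g₁ g₂ : GlobalType R M)
  | alt (g₁ g₂ : GlobalType R M)
  | star (g : GlobalType R M)

/-- Trace language of a global type. -/
def trG : GlobalType R M → Lang R M
  | .skip => {[]}
  | .act a => {[a]}
  | .seq g₁ g₂ => catL (trG g₁) (trG g₂)
  | .par g₁ g₂ => shuffleL (trG g₁) (trG g₂)
  | .alt g₁ g₂ => trG g₁ ∪ trG g₂
  | .star g => starL (trG g)

/-- Pre-session types. -/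
inductive PST (R M V : Type*) where
  | done
  | var (X : V)
  | out (p : R) (a : M) (T : PST R M V)
  | inp (s : Finset R) (a : M) (T : PST R M V)
  | ichoice (T S : PST R M V)
  | echoice (T S : PST R M V)
  | mu (X : V) (T : PST R M V)

/-- Capture-avoiding simultaneous substitution of recursion variables
(intended usage: the substituted types are closed). -/
def substAll [DecidableEq V] (ρ : V → PST R M V) : PST R M V → PST R M V
  | .done => .done
  | .var X => ρ X
  | .out p a T => .out p a (substAll ρ T)
  | .inp s a T => .inp s a (substAll ρ T)
  | .ichoice T S => .ichoice (substAll ρ T) (substAll ρ S)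
  | .echoice T S => .echoice (substAll ρ T) (substAll ρ S)
  | .mu X T => .mu X (substAll (fun Y => if Y = X then .var X else ρ Y) T)

/-- One-step unfolding of a recursive type `μX.T`. -/
def unfold [DecidableEq V] (X : V) (T : PST R M V) : PST R M V :=
  substAll (fun Y => if Y = X then .mu X T else .var Y) T

/-- Free recursion variables of a pre-session type. -/
def fv : PST R M V → Set V
  | .done => ∅
  | .var X => {X}
  | .out _ _ T => fv T
  | .inp _ _ T => fv T
  | .ichoice T S => fv T ∪ fv S
  | .echoice T S => fv T ∪ fv S
  | .mu X T => fv T \ {X}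

/-- `CanOut T p a T'`: `T` offers (modulo internal choice and fold/unfold)
the top-level output `p!a` with continuation `T'`. -/
inductive CanOut [DecidableEq V] : PST R M V → R → M → PST R M V → Prop
  | out {p : R} {a : M} {T : PST R M V} : CanOut (.out p a T) p a T
  | left {T S T' : PST R M V} {p : R} {a : M} :
      CanOut T p a T' → CanOut (.ichoice T S) p a T'
  | right {T S T' : PST R M V} {p : R} {a : M} :
      CanOut S p a T' → CanOut (.ichoice T S) p a T'
  | mu {X : V} {T T' : PST R M V} {p : R} {a : M} :
      CanOut (unfold X T) p a T' → CanOut (.mu X T) p a T'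

/-- `CanIn T s a T'`: `T` offers (modulo external choice and fold/unfold)
the top-level input `s?a` with continuation `T'`. -/
inductive CanIn [DecidableEq V] : PST R M V → Finset R → M → PST R M V → Prop
  | inp {s : Finset R} {a : M} {T : PST R M V} : CanIn (.inp s a T) s a T
  | left {T S T' : PST R M V} {s : Finset R} {a : M} :
      CanIn T s a T' → CanIn (.echoice T S) s a T'
  | right {T S T' : PST R M V} {s : Finset R} {a : M} :
      CanIn S s a T' → CanIn (.echoice T S) s a T'
  | mu {X : V} {T T' : PST R M V} {s : Finset R} {a : M} :
      CanIn (unfold X T) s a T' → CanIn (.mu X T) s a T'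

/-- `T` behaves as an internal choice of outputs with pairwise distinct prefixes,
with all continuations in `K`. -/
def OutShape [DecidableEq V] (T : PST R M V) (K : Set (PST R M V)) : Prop :=
  (∃ p a T', CanOut T p a T') ∧
  (¬ ∃ s a T', CanIn T s a T') ∧
  (∀ p a T' T'', CanOut T p a T' → CanOut T p a T'' → T' = T'') ∧
  (∀ p a T', CanOut T p a T' → T' ∈ K)

/-- `T` behaves as an external choice of inputs such that `s ⊆ s'` together with equal
messages forces equal branches, with all continuations in `K`. -/
def InShape [DecidableEq V] (T : PST R M V) (K : Set (PST R M V)) : Prop :=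
  (∃ s a T', CanIn T s a T') ∧
  (¬ ∃ p a T', CanOut T p a T') ∧
  (∀ s a T' s' T'', CanIn T s a T' → CanIn T s' a T'' → s ⊆ s' → s = s' ∧ T' = T'') ∧
  (∀ s a T', CanIn T s a T' → T' ∈ K)

/-- Session types: pre-session types that (coinductively) are either `end`, an internal
choice of outputs with pairwise distinct prefixes, or an external choice of inputs
satisfying the separation condition, all of whose continuations are again session types. -/
def IsST [DecidableEq V] (T : PST R M V) : Prop :=
  ∃ K : Set (PST R M V), T ∈ K ∧
    ∀ U ∈ K, U = PST.done ∨ OutShape U K ∨ InShape U K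

/-- A buffer: a FIFO queue of message types for each ordered pair (sender, receiver). -/
abbrev Buffer (R M : Type*) := R → R → List M

/-- A session environment, represented as a total map which is `end` outside its domain. -/
abbrev Session (R M V : Type*) := R → PST R M V

/-- The empty buffer. -/
def emptyBuf : Buffer R M := fun _ _ => []

/-- The session has a finite domain. -/
def FinDom (Δ : Session R M V) : Prop := {p | Δ p ≠ PST.done}.Finite

/-- Every role is successfully terminated. -/
def Ended (Δ : Session R M V) : Prop := ∀ p, Δ p = PST.done

/-- One reduction step of a configuration, labelled by `none` (an output, which enqueues
a message) or by `some` interaction (an input, which dequeues one message of the given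
type from each sender in the interaction). -/
inductive Step [DecidableEq R] [DecidableEq V] :
    Buffer R M → Session R M V → Option (Interaction R M) → Buffer R M → Session R M V → Prop
  | output {B : Buffer R M} {Δ : Session R M V} {p q : R} {a : M} {T' : PST R M V}
      (B' : Buffer R M) :
      CanOut (Δ p) q a T' →
      B' p q = B p q ++ [a] →
      (∀ s r, ¬(s = p ∧ r = q) → B' s r = B s r) →
      Step B Δ none B' (Function.update Δ p T')
  | input {B : Buffer R M} {Δ : Session R M V} {T' : PST R M V}
      (α : Interaction R M) (B' : Buffer R M) :
      CanIn (Δ α.receiver) α.senders α.msg T' →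
      (∀ q ∈ α.senders, B q α.receiver = α.msg :: B' q α.receiver) →
      (∀ s r, ¬(s ∈ α.senders ∧ r = α.receiver) → B' s r = B s r) →
      Step B Δ (some α) B' (Function.update Δ α.receiver T')

/-- Finite reduction sequences; the trace records the labels of the input steps, in order. -/
inductive Steps [DecidableEq R] [DecidableEq V] :
    Buffer R M → Session R M V → Trace R M → Buffer R M → Session R M V → Prop
  | refl {B : Buffer R M} {Δ : Session R M V} : Steps B Δ [] B Δ
  | tau {B B' B'' : Buffer R M} {Δ Δ' Δ'' : Session R M V} {φ : Trace R M} :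
      Step B Δ none B' Δ' → Steps B' Δ' φ B'' Δ'' → Steps B Δ φ B'' Δ''
  | act {B B' B'' : Buffer R M} {Δ Δ' Δ'' : Session R M V} {α : Interaction R M}
      {φ : Trace R M} :
      Step B Δ (some α) B' Δ' → Steps B' Δ' φ B'' Δ'' → Steps B Δ (α :: φ) B'' Δ''

/-- A live session: every reachable configuration can reach a configuration with empty
buffer where every participant has successfully terminated. -/
def Live [DecidableEq R] [DecidableEq V] (Δ : Session R M V) : Prop :=
  ∀ φ B' Δ', Steps emptyBuf Δ φ B' Δ' →
    ∃ ψ Δ'', Steps B' Δ' ψ emptyBuf Δ'' ∧ Ended Δ''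

/-- Traces of a session (empty if the session is not live). -/
def trS [DecidableEq R] [DecidableEq V] (Δ : Session R M V) : Lang R M :=
  {φ | Live Δ ∧ ∃ Δ'', Steps emptyBuf Δ φ emptyBuf Δ'' ∧ Ended Δ''}

/-- The environment transformation performed by projecting a single interaction. -/
def actionUpd [DecidableEq R] (α : Interaction R M) (Δ : Session R M V) : Session R M V :=
  fun r =>
    if r = α.receiver then PST.inp α.senders α.msg (Δ r)
    else if r ∈ α.senders then PST.out α.receiver α.msg (Δ r)
    else Δ r

/-- The semantic projection judgment `Δ ⊢ G : Δ'`. -/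
inductive SP [DecidableEq R] [DecidableEq V] :
    Session R M V → GlobalType R M → Session R M V → Prop
  | skip {Δ : Session R M V} : SP Δ .skip Δ
  | action {Δ : Session R M V} (α : Interaction R M) : SP Δ (.act α) (actionUpd α Δ)
  | seq {Δ Δ' Δ'' : Session R M V} {g₁ g₂ : GlobalType R M} :
      SP Δ g₂ Δ' → SP Δ' g₁ Δ'' → SP Δ (.seq g₁ g₂) Δ''
  | alt {Δ Δ₁ Δ₂ : Session R M V} {g₁ g₂ : GlobalType R M} (p : R) :
      SP Δ g₁ Δ₁ → SP Δ g₂ Δ₂ → (∀ q, q ≠ p → Δ₁ q = Δ₂ q) →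
      SP Δ (.alt g₁ g₂) (Function.update Δ₁ p (PST.ichoice (Δ₁ p) (Δ₂ p)))
  | iter {Δ : Session R M V} {g : GlobalType R M} (p : R) (T₁ T₂ : PST R M V) :
      SP (Function.update Δ p (PST.ichoice T₁ T₂)) g (Function.update Δ p T₁) →
      SP (Function.update Δ p T₂) (.star g) (Function.update Δ p (PST.ichoice T₁ T₂))
  | subsume {Δ Δ' Δ'' : Session R M V} {g g' : GlobalType R M} :
      SP Δ g' Δ' →
      trG g' ⊆ trG g → trG g ⊆ perm (trG g') →
      trS Δ'' ⊆ trS Δ' → trS Δ' ⊆ perm (trS Δ'') →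
      SP Δ g Δ''

/-- The projection of a global type from the initial environment assigning `end`
to every participant. -/
def SProot [DecidableEq R] [DecidableEq V] (g : GlobalType R M) (Δ : Session R M V) : Prop :=
  SP (fun _ => PST.done) g Δ

/-- `OccInp p a T`: an input prefix `p?a` occurs (syntactically) in `T`. -/
inductive OccInp (p : R) (a : M) : PST R M V → Prop
  | here {s : Finset R} {T : PST R M V} : p ∈ s → OccInp p a (.inp s a T)
  | inp {s : Finset R} {b : M} {T : PST R M V} : OccInp p a T → OccInp p a (.inp s b T)
  | out {q : R} {b : M} {T : PST R M V} : OccInp p a T → OccInp p a (.out q b T)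
  | ichoiceL {T S : PST R M V} : OccInp p a T → OccInp p a (.ichoice T S)
  | ichoiceR {T S : PST R M V} : OccInp p a S → OccInp p a (.ichoice T S)
  | echoiceL {T S : PST R M V} : OccInp p a T → OccInp p a (.echoice T S)
  | echoiceR {T S : PST R M V} : OccInp p a S → OccInp p a (.echoice T S)
  | mu {X : V} {T : PST R M V} : OccInp p a T → OccInp p a (.mu X T)

/-- One step of the compatibility relation, relative to a set `K` of types already
assumed compatible with the input `p?a`. -/
def CompatStep [DecidableEq V] (p : R) (a : M) (K : Set (PST R M V)) (T : PST R M V) : Prop :=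
  (¬ OccInp p a T) ∨
  ((∃ q b T', CanOut T q b T') ∧ ∀ q b T', CanOut T q b T' → T' ∈ K) ∨
  ((∃ s b T', CanIn T s b T') ∧
    ∀ s b T', CanIn T s b T' → (p ∈ s ∧ a ≠ b) ∨ (p ∉ s ∧ T' ∈ K))

/-- The input `p?a` is compatible with the session type `T` (greatest fixed point). -/
def Compat [DecidableEq V] (p : R) (a : M) (T : PST R M V) : Prop :=
  ∃ K : Set (PST R M V), T ∈ K ∧ ∀ U ∈ K, CompatStep p a K U

/-- The input `s?a` is compatible with `T` if `p?a` is compatible with `T` for some `p ∈ s`. -/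
def CompatIn [DecidableEq V] (s : Finset R) (a : M) (T : PST R M V) : Prop :=
  ∃ p ∈ s, Compat p a T

/-- Output case of one step of the merge relation. -/
def MergeStepOut [DecidableEq V] (K : Set (PST R M V × PST R M V × PST R M V))
    (T S U : PST R M V) : Prop :=
  (∃ p a T', CanOut T p a T') ∧
  (∀ p a, (∃ T', CanOut T p a T') ↔ (∃ S', CanOut S p a S')) ∧
  (∀ p a, (∃ T', CanOut T p a T') ↔ (∃ U', CanOut U p a U')) ∧
  (∀ p a T' S' U', CanOut T p a T' → CanOut S p a S' → CanOut U p a U' → (T', S', U') ∈ K)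

/-- Input case of one step of the merge relation: `T` and `S` are compatible external
choices and `U` combines the common branches (merged) with the residual branches of
each side. -/
def MergeStepIn [DecidableEq V] (K : Set (PST R M V × PST R M V × PST R M V))
    (T S U : PST R M V) : Prop :=
  (∃ s a T', CanIn T s a T') ∧
  (∃ s a S', CanIn S s a S') ∧
  (∀ s a T', CanIn T s a T' → (∃ S', CanIn S s a S') ∨ CompatIn s a S) ∧
  (∀ s a S', CanIn S s a S' → (∃ T', CanIn T s a T') ∨ CompatIn s a T) ∧
  (∀ s a, (∃ U', CanIn U s a U') ↔ ((∃ T', CanIn T s a T') ∨ (∃ S', CanIn S s a S'))) ∧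
  (∀ s a T' S' U', CanIn T s a T' → CanIn S s a S' → CanIn U s a U' → (T', S', U') ∈ K) ∧
  (∀ s a T' U', CanIn T s a T' → ¬(∃ S', CanIn S s a S') → CanIn U s a U' → U' = T') ∧
  (∀ s a S' U', CanIn S s a S' → ¬(∃ T', CanIn T s a T') → CanIn U s a U' → U' = S')

/-- One step of the merge relation. -/
def MergeStep [DecidableEq V] (K : Set (PST R M V × PST R M V × PST R M V))
    (T S U : PST R M V) : Prop :=
  (T = PST.done ∧ S = PST.done ∧ U = PST.done) ∨
  (∃ X, T = PST.var X ∧ S = PST.var X ∧ U = PST.var X) ∨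
  MergeStepOut K T S U ∨ MergeStepIn K T S U

/-- `MergeST T S U`: `U` is the merge `T ⋈ S` (coinductively, as greatest fixed point). -/
def MergeST [DecidableEq V] (T S U : PST R M V) : Prop :=
  ∃ K : Set (PST R M V × PST R M V × PST R M V), (T, S, U) ∈ K ∧
    ∀ x ∈ K, MergeStep K x.1 x.2.1 x.2.2

/-- The algorithmic projection judgment `Δ ⊢A G : Δ'`. -/
inductive AP [DecidableEq R] [DecidableEq V] :
    Session R M V → GlobalType R M → Session R M V → Prop
  | skip {Δ : Session R M V} : AP Δ .skip Δ
  | action {Δ : Session R M V} (α : Interaction R M) : AP Δ (.act α) (actionUpd α Δ)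
  | seq {Δ Δ' Δ'' : Session R M V} {g₁ g₂ : GlobalType R M} :
      AP Δ g₂ Δ' → AP Δ' g₁ Δ'' → AP Δ (.seq g₁ g₂) Δ''
  | alt {Δ Δ₁ Δ₂ : Session R M V} {g₁ g₂ : GlobalType R M} (p : R) (Δm : Session R M V) :
      AP Δ g₁ Δ₁ → AP Δ g₂ Δ₂ →
      (∀ q, q ≠ p → MergeST (Δ₁ q) (Δ₂ q) (Δm q)) →
      AP Δ (.alt g₁ g₂) (Function.update Δm p (PST.ichoice (Δ₁ p) (Δ₂ p)))
  | iter {Δ : Session R M V} {g : GlobalType R M}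
      (p : R) (I : Finset R) (X : V) (Xv : R → V)
      (T S : PST R M V) (Ti Si Mi : R → PST R M V)
      (hpI : p ∉ I)
      (hinj : ∀ q ∈ I, ∀ q' ∈ I, Xv q = Xv q' → q = q')
      (hXXv : ∀ q ∈ I, X ≠ Xv q)
      (hXT : X ∉ fv T) (hXTi : ∀ q ∈ I, X ∉ fv (Ti q)) (hXΔ : ∀ r, X ∉ fv (Δ r))
      (hXvT : ∀ q ∈ I, Xv q ∉ fv T) (hXvTi : ∀ q ∈ I, ∀ q' ∈ I, Xv q ∉ fv (Ti q'))
      (hXvΔ : ∀ q ∈ I, ∀ r, Xv q ∉ fv (Δ r))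
      (hmerge : ∀ q ∈ I, MergeST (Ti q) (Si q) (Mi q)) :
      AP (fun r => if r = p then PST.var X else if r ∈ I then PST.var (Xv r) else Δ r) g
         (fun r => if r = p then S else if r ∈ I then Si r else Δ r) →
      AP (fun r => if r = p then T else if r ∈ I then Ti r else Δ r) (.star g)
         (fun r => if r = p then PST.mu X (PST.ichoice T S)
                   else if r ∈ I then PST.mu (Xv r) (Mi r) else Δ r)

/-- The algorithmic projection of a global type from the initial environment
assigning `end` to every participant. -/
def AProot [DecidableEq R] [DecidableEq V] (g : GlobalType R M) (Δ : Session R M V) : Prop :=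
  AP (fun _ => PST.done) g Δ

/-- A substitution mapping every recursion variable to a closed session type. -/
def ClosedSTSubst [DecidableEq V] (ρ : V → PST R M V) : Prop :=
  ∀ X, fv (ρ X) = ∅ ∧ IsST (ρ X)

/-- Pointwise application of a substitution to a session environment. -/
def applySub [DecidableEq V] (ρ : V → PST R M V) (Δ : Session R M V) : Session R M V :=
  fun p => substAll ρ (Δ p)

/-- Implementation pre-order: `ipre L' L` means `L' ⊑ L`, i.e. `L ⊆ L' ⊆ perm L`. -/
def ipre (L' L : Lang R M) : Prop := L ⊆ L' ∧ L' ⊆ perm L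

/-- A language is regular if it is accepted by a DFA with finitely many states. -/
def IsRegularL (L : Lang R M) : Prop :=
  ∃ (σ : Type) (_ : Fintype σ) (dfa : DFA (Interaction R M) σ), dfa.accepts = L

/-! Run the merged session against the two original ones, all three sharing the same buffer.
While `p` has not moved, the type of every other role in the merged session is the merge of
its types in the two originals. An input that the merge offers but one side lacks is
compatible with that side's type, so in that (live) session the message enabling it would
stay at the head of its queue forever, which is impossible. When `p` picks a branch of
`T₁ ⊕ T₂`, the simulation commits to the corresponding original session, in which every type
is merged into the one of the merged session. Conversely a merge offers every action of its
components, so a completing run of that original session lifts to the merged session. -/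

theorem forall_update₂ {ι α β : Type*} [DecidableEq ι] {P : α → β → Prop} {f : ι → α}
    {g : ι → β} {x : ι} {a : α} {b : β} (h : ∀ r ≠ x, P (f r) (g r)) (hx : P a b) :
    ∀ r, P (Function.update f x a r) (Function.update g x b r) := by
  intro r
  rcases eq_or_ne r x with rfl | hr
  · simpa using hx
  · simpa [hr] using h r hr

theorem forall_update₃ {ι α β γ : Type*} [DecidableEq ι] {P : ι → α → β → γ → Prop}
    {f : ι → α} {g : ι → β} {k : ι → γ} {x : ι} {a : α} {b : β} {c : γ}
    (h : ∀ r ≠ x, P r (f r) (g r) (k r)) (hx : P x a b c) :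
    ∀ r, P r (Function.update f x a r) (Function.update g x b r) (Function.update k x c r) := by
  intro r
  rcases eq_or_ne r x with rfl | hr
  · simpa using hx
  · simpa [hr] using h r hr

section Types

variable [DecidableEq V] {T S U T' S' U' : PST R M V} {q u : R} {a b : M} {s : Finset R}

theorem CanOut.not_canIn (h : CanOut T q a T') : ¬ CanIn T s b S' := by
  induction h generalizing S' with
  | out | left | right => rintro ⟨⟩
  | mu _ ih => intro h; cases h with | mu h => exact ih h

theorem OccInp.of_substAll {ρ : V → PST R M V} (h : OccInp u a (substAll ρ T)) :
    OccInp u a T ∨ ∃ X, OccInp u a (ρ X) := by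
  induction T generalizing ρ with
  | done => cases h
  | var X => exact .inr ⟨X, h⟩
  | out q b T ih => cases h with
    | out h => exact (ih h).imp_left .out
  | inp s b T ih => cases h with
    | here hu => exact .inl (.here hu)
    | inp h => exact (ih h).imp_left .inp
  | ichoice T S ihT ihS => cases h with
    | ichoiceL h => exact (ihT h).imp_left .ichoiceL
    | ichoiceR h => exact (ihS h).imp_left .ichoiceR
  | echoice T S ihT ihS => cases h with
    | echoiceL h => exact (ihT h).imp_left .echoiceL
    | echoiceR h => exact (ihS h).imp_left .echoiceR
  | mu X T ih => cases h with
    | mu h =>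
      rcases ih h with h | ⟨Y, hY⟩
      · exact .inl (.mu h)
      · by_cases hYX : Y = X
        · simp only [hYX, if_true] at hY
          cases hY
        · exact .inr ⟨Y, by simpa [hYX] using hY⟩

theorem OccInp.of_unfold {X : V} (h : OccInp u a (unfold X T)) : OccInp u a (.mu X T) := by
  rcases h.of_substAll with h | ⟨Y, hY⟩
  · exact .mu h
  · by_cases hYX : Y = X
    · simpa [hYX] using hY
    · simp only [hYX, if_false] at hY
      cases hY

theorem OccInp.of_canOut (h : CanOut T q b T') (ho : OccInp u a T') : OccInp u a T := by
  induction h with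
  | out => exact .out ho
  | left _ ih => exact .ichoiceL (ih ho)
  | right _ ih => exact .ichoiceR (ih ho)
  | mu _ ih => exact .of_unfold (ih ho)

theorem OccInp.of_canIn (h : CanIn T s b T') (ho : OccInp u a T') : OccInp u a T := by
  induction h with
  | inp => exact .inp ho
  | left _ ih => exact .echoiceL (ih ho)
  | right _ ih => exact .echoiceR (ih ho)
  | mu _ ih => exact .of_unfold (ih ho)

theorem CanIn.occInp (h : CanIn T s a T') (hu : u ∈ s) : OccInp u a T := by
  induction h with
  | inp => exact .here hu
  | left _ ih => exact .echoiceL (ih hu)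
  | right _ ih => exact .echoiceR (ih hu)
  | mu _ ih => exact .of_unfold (ih hu)

theorem compat_of_not_occInp (h : ¬ OccInp u a T) : Compat u a T :=
  ⟨{W | ¬ OccInp u a W}, h, fun _ hW => .inl hW⟩

theorem Compat.of_canOut (hc : Compat u a T) (h : CanOut T q b T') : Compat u a T' := by
  obtain ⟨K, hT, hK⟩ := hc
  rcases hK T hT with hno | ⟨-, hout⟩ | ⟨⟨_, _, _, hin⟩, -⟩
  · exact compat_of_not_occInp fun ho => hno (ho.of_canOut h)
  · exact ⟨K, hout _ _ _ h, hK⟩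
  · exact absurd hin h.not_canIn

theorem Compat.of_canIn (hc : Compat u a T) (h : CanIn T s b T') :
    (u ∈ s ∧ b ≠ a) ∨ (u ∉ s ∧ Compat u a T') := by
  obtain ⟨K, hT, hK⟩ := hc
  rcases hK T hT with hno | ⟨⟨_, _, _, hout⟩, -⟩ | ⟨-, hin⟩
  · by_cases hu : u ∈ s
    · exact .inl ⟨hu, by rintro rfl; exact hno (h.occInp hu)⟩
    · exact .inr ⟨hu, compat_of_not_occInp fun ho => hno (ho.of_canIn h)⟩
  · exact absurd h hout.not_canIn
  · rcases hin _ _ _ h with ⟨hu, hne⟩ | ⟨hu, hK'⟩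
    · exact .inl ⟨hu, hne.symm⟩
    · exact .inr ⟨hu, K, hK', hK⟩

theorem IsST.exists_canOut_ichoice (h : IsST (PST.ichoice T S)) :
    ∃ q b U, CanOut (PST.ichoice T S) q b U := by
  obtain ⟨K, hT, hK⟩ := h
  rcases hK _ hT with h | ⟨hout, -⟩ | ⟨⟨_, _, _, hin⟩, -⟩
  · cases h
  · exact hout
  · cases hin

theorem MergeST.symm (h : MergeST T S U) : MergeST S T U := by
  refine ⟨{x | MergeST x.2.1 x.1 x.2.2}, h, ?_⟩
  rintro ⟨S, T, U⟩ ⟨K, hK, hcl⟩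
  rcases hcl _ hK with ⟨hT, hS, hU⟩ | ⟨X, hT, hS, hU⟩ | ⟨⟨q, b, T', hT'⟩, o2, o3, o4⟩ |
      ⟨c1, c2, c3, c4, c5, c6, c7, c8⟩
  · exact .inl ⟨hS, hT, hU⟩
  · exact .inr (.inl ⟨X, hS, hT, hU⟩)
  · obtain ⟨S', hS'⟩ := (o2 q b).mp ⟨T', hT'⟩
    exact .inr (.inr (.inl ⟨⟨q, b, S', hS'⟩, fun q b => (o2 q b).symm,
      fun q b => (o2 q b).symm.trans (o3 q b),
      fun q b S' T' U' hS hT hU => ⟨K, o4 q b T' S' U' hT hS hU, hcl⟩⟩))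
  · exact .inr (.inr (.inr ⟨c2, c1, c4, c3, fun s a => (c5 s a).trans or_comm,
      fun s a S' T' U' hS hT hU => ⟨K, c6 s a T' S' U' hT hS hU, hcl⟩, c8, c7⟩))

theorem MergeST.eq_done (h : MergeST PST.done S U) : U = PST.done := by
  obtain ⟨K, hK, hcl⟩ := h
  rcases hcl _ hK with ⟨-, -, hU⟩ | ⟨X, hX, -⟩ | ⟨⟨_, _, _, hout⟩, -⟩ | ⟨⟨_, _, _, hin⟩, -⟩
  · exact hU
  · cases hX
  · cases hout
  · cases hin

theorem MergeST.canOut_left (h : MergeST T S U) (hT : CanOut T q b T') :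
    ∃ S' U', CanOut S q b S' ∧ CanOut U q b U' ∧ MergeST T' S' U' := by
  obtain ⟨K, hK, hcl⟩ := h
  rcases hcl _ hK with ⟨rfl, -⟩ | ⟨X, rfl, -⟩ | ⟨-, o2, o3, o4⟩ | ⟨⟨_, _, _, hin⟩, -⟩
  · cases hT
  · cases hT
  · obtain ⟨S', hS'⟩ := (o2 q b).mp ⟨T', hT⟩
    obtain ⟨U', hU'⟩ := (o3 q b).mp ⟨T', hT⟩
    exact ⟨S', U', hS', hU', K, o4 q b T' S' U' hT hS' hU', hcl⟩
  · exact absurd hin hT.not_canIn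

theorem MergeST.canOut_of_merge (h : MergeST T S U) (hU : CanOut U q b U') :
    ∃ T' S', CanOut T q b T' ∧ CanOut S q b S' ∧ MergeST T' S' U' := by
  obtain ⟨K, hK, hcl⟩ := h
  rcases hcl _ hK with ⟨-, -, rfl⟩ | ⟨X, -, -, rfl⟩ | ⟨-, o2, o3, o4⟩ |
      ⟨⟨s, c, T₀, hT₀⟩, -, -, -, c5, -⟩
  · cases hU
  · cases hU
  · obtain ⟨T', hT'⟩ := (o3 q b).mpr ⟨U', hU⟩
    obtain ⟨S', hS'⟩ := (o2 q b).mp ⟨T', hT'⟩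
    exact ⟨T', S', hT', hS', K, o4 q b T' S' U' hT' hS' hU, hcl⟩
  · obtain ⟨U₀, hU₀⟩ := (c5 s c).mpr (.inl ⟨T₀, hT₀⟩)
    exact absurd hU₀ hU.not_canIn

theorem MergeST.canIn_of_merge (h : MergeST T S U) (hU : CanIn U s a U') :
    (∃ T' S', CanIn T s a T' ∧ CanIn S s a S' ∧ MergeST T' S' U') ∨
      (CanIn T s a U' ∧ CompatIn s a S) ∨ (CanIn S s a U' ∧ CompatIn s a T) := by
  obtain ⟨K, hK, hcl⟩ := h
  rcases hcl _ hK with ⟨-, -, rfl⟩ | ⟨X, -, -, rfl⟩ | ⟨⟨q, b, T₀, hT₀⟩, -, o3, -⟩ |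
      ⟨-, -, c3, c4, c5, c6, c7, c8⟩
  · cases hU
  · cases hU
  · obtain ⟨U₀, hU₀⟩ := (o3 q b).mp ⟨T₀, hT₀⟩
    exact absurd hU hU₀.not_canIn
  · by_cases hT : ∃ T', CanIn T s a T'
    · obtain ⟨T', hT'⟩ := hT
      by_cases hS : ∃ S', CanIn S s a S'
      · obtain ⟨S', hS'⟩ := hS
        exact .inl ⟨T', S', hT', hS', K, c6 s a T' S' U' hT' hS' hU, hcl⟩
      · obtain rfl := c7 s a T' U' hT' hS hU
        exact .inr (.inl ⟨hT', (c3 s a _ hT').resolve_left hS⟩)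
    · obtain ⟨S', hS'⟩ := ((c5 s a).mp ⟨U', hU⟩).resolve_left hT
      obtain rfl := c8 s a S' U' hS' hT hU
      exact .inr (.inr ⟨hS', (c4 s a _ hS').resolve_left hT⟩)

theorem MergeST.canIn_left (h : MergeST T S U) (hT : CanIn T s a T') :
    ∃ U', CanIn U s a U' ∧ (U' = T' ∨ ∃ S', MergeST T' S' U') := by
  obtain ⟨K, hK, hcl⟩ := h
  rcases hcl _ hK with ⟨rfl, -⟩ | ⟨X, rfl, -⟩ | ⟨⟨q, b, T₀, hT₀⟩, -⟩ |
      ⟨-, -, -, -, c5, c6, c7, -⟩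
  · cases hT
  · cases hT
  · exact absurd hT hT₀.not_canIn
  · obtain ⟨U', hU'⟩ := (c5 s a).mpr (.inl ⟨T', hT⟩)
    refine ⟨U', hU', ?_⟩
    by_cases hS : ∃ S', CanIn S s a S'
    · obtain ⟨S', hS'⟩ := hS
      exact .inr ⟨S', K, c6 s a T' S' U' hT hS' hU', hcl⟩
    · exact .inl (c7 s a T' U' hT hS hU')

def MergedInto (T U : PST R M V) : Prop :=
  U = T ∨ ∃ S, MergeST T S U

theorem MergedInto.refl (T : PST R M V) : MergedInto T T := .inl rfl

theorem MergeST.mergedInto (h : MergeST T S U) : MergedInto T U := .inr ⟨S, h⟩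

theorem MergedInto.eq_done (h : MergedInto PST.done U) : U = PST.done :=
  h.elim id fun ⟨_, hm⟩ => hm.eq_done

theorem MergedInto.canOut (h : MergedInto T U) (hT : CanOut T q b T') :
    ∃ U', CanOut U q b U' ∧ MergedInto T' U' := by
  rcases h with rfl | ⟨S, hm⟩
  · exact ⟨T', hT, .refl T'⟩
  · obtain ⟨_, U', -, hU', hm'⟩ := hm.canOut_left hT
    exact ⟨U', hU', hm'.mergedInto⟩

theorem MergedInto.canIn (h : MergedInto T U) (hT : CanIn T s a T') :
    ∃ U', CanIn U s a U' ∧ MergedInto T' U' := by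
  rcases h with rfl | ⟨S, hm⟩
  · exact ⟨T', hT, .refl T'⟩
  · exact hm.canIn_left hT

theorem MergedInto.canOut_of_merge (h : MergedInto T U) (hU : CanOut U q b U') :
    ∃ T', CanOut T q b T' ∧ MergedInto T' U' := by
  rcases h with rfl | ⟨S, hm⟩
  · exact ⟨U', hU, .refl U'⟩
  · obtain ⟨T', _, hT', -, hm'⟩ := hm.canOut_of_merge hU
    exact ⟨T', hT', hm'.mergedInto⟩

theorem MergedInto.canIn_of_merge (h : MergedInto T U) (hU : CanIn U s a U') :
    (∃ T', CanIn T s a T' ∧ MergedInto T' U') ∨ CompatIn s a T := by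
  rcases h with rfl | ⟨S, hm⟩
  · exact .inl ⟨U', hU, .refl U'⟩
  · rcases hm.canIn_of_merge hU with ⟨T', _, hT', -, hm'⟩ | ⟨hT, -⟩ | ⟨-, hc⟩
    · exact .inl ⟨T', hT', hm'.mergedInto⟩
    · exact .inl ⟨U', hT, .refl U'⟩
    · exact .inr hc

end Types

section Runs

variable [DecidableEq R] [DecidableEq V] {Sig Δ Δ' Θ Θ' : Session R M V} {B B' : Buffer R M}
  {κ : Option (Interaction R M)} {φ : Trace R M}

theorem Steps.append_step {B₀ : Buffer R M} {Δ₀ : Session R M V}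
    (h : Steps B₀ Δ₀ φ B Δ) (hs : Step B Δ κ B' Δ') : Steps B₀ Δ₀ (φ ++ κ.toList) B' Δ' := by
  induction h with
  | refl => cases κ with
    | none => exact .tau hs .refl
    | some α => exact .act hs .refl
  | tau h _ ih => exact .tau h (ih hs)
  | act h _ ih => exact .act h (ih hs)

def Reachable (Sig : Session R M V) (B : Buffer R M) (Δ : Session R M V) : Prop :=
  ∃ φ, Steps emptyBuf Sig φ B Δ

theorem Reachable.refl (Sig : Session R M V) : Reachable Sig emptyBuf Sig := ⟨[], .refl⟩

theorem Reachable.step (h : Reachable Sig B Δ) (hs : Step B Δ κ B' Δ') :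
    Reachable Sig B' Δ' :=
  let ⟨_, hφ⟩ := h
  ⟨_, hφ.append_step hs⟩

/-- The message `a` from `u` heads the queue of `q`, and compatibility of `u?a` with the type
of `q` means that `q` can never consume it. -/
def Blocked (u q : R) (a : M) (B : Buffer R M) (Δ : Session R M V) : Prop :=
  (∃ w, B u q = a :: w) ∧ Compat u a (Δ q)

theorem Blocked.step {u q : R} {a : M} (hb : Blocked u q a B Δ) (hs : Step B Δ κ B' Δ') :
    Blocked u q a B' Δ' := by
  obtain ⟨⟨w, hw⟩, hc⟩ := hb
  cases hs with
  | @output r v b T' _ hco hB hoth =>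
    refine ⟨?_, ?_⟩
    · by_cases huq : u = r ∧ q = v
      · obtain ⟨rfl, rfl⟩ := huq
        exact ⟨w ++ [b], by rw [hB, hw, List.cons_append]⟩
      · exact ⟨w, by rw [hoth u q huq, hw]⟩
    · rcases eq_or_ne q r with rfl | hq
      · simpa using hc.of_canOut hco
      · simpa [hq] using hc
  | input α _ hci hcons hoth =>
    rcases eq_or_ne q α.receiver with rfl | hq
    · rcases hc.of_canIn hci with ⟨hu, hne⟩ | ⟨hu, hc'⟩
      · have := hcons u hu
        rw [hw, List.cons.injEq] at this
        exact absurd this.1.symm hne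
      · exact ⟨⟨w, by rw [hoth u _ fun h => hu h.1, hw]⟩, by simpa using hc'⟩
    · exact ⟨⟨w, by rw [hoth u q fun h => hq h.2, hw]⟩, by simpa [hq] using hc⟩

theorem Blocked.steps {u q : R} {a : M} (hb : Blocked u q a B Δ) (hs : Steps B Δ φ B' Δ') :
    Blocked u q a B' Δ' := by
  induction hs with
  | refl => exact hb
  | tau h _ ih | act h _ ih => exact ih (hb.step h)

theorem Live.not_blocked {u q : R} {a : M} (hl : Live Sig) (hr : Reachable Sig B Δ) :
    ¬ Blocked u q a B Δ := by
  intro hb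
  obtain ⟨φ, hφ⟩ := hr
  obtain ⟨ψ, Δf, hψ, -⟩ := hl φ B Δ hφ
  obtain ⟨⟨w, hw⟩, -⟩ := hb.steps hψ
  cases hw

theorem Live.not_compatIn {s : Finset R} {q : R} {a : M} (hl : Live Sig)
    (hr : Reachable Sig B Δ) (hB : ∀ u ∈ s, ∃ w, B u q = a :: w) : ¬ CompatIn s a (Δ q) :=
  fun ⟨u, hu, hc⟩ => hl.not_blocked hr ⟨hB u hu, hc⟩

theorem Step.lift_mergedInto (hs : Step B Δ κ B' Δ') (hrel : ∀ r, MergedInto (Δ r) (Θ r)) :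
    ∃ Θ', Step B Θ κ B' Θ' ∧ ∀ r, MergedInto (Δ' r) (Θ' r) := by
  cases hs with
  | output _ hco hB hoth =>
    obtain ⟨U', hU', hm⟩ := (hrel _).canOut hco
    exact ⟨_, .output _ hU' hB hoth, forall_update₂ (fun r _ => hrel r) hm⟩
  | input α _ hci hcons hoth =>
    obtain ⟨U', hU', hm⟩ := (hrel _).canIn hci
    exact ⟨_, .input α _ hU' hcons hoth, forall_update₂ (fun r _ => hrel r) hm⟩

theorem Steps.lift_mergedInto (hs : Steps B Δ φ B' Δ') (hrel : ∀ r, MergedInto (Δ r) (Θ r)) :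
    ∃ Θ', Steps B Θ φ B' Θ' ∧ ∀ r, MergedInto (Δ' r) (Θ' r) := by
  induction hs generalizing Θ with
  | refl => exact ⟨Θ, .refl, hrel⟩
  | tau h _ ih =>
    obtain ⟨Θ₁, h₁, hrel₁⟩ := h.lift_mergedInto hrel
    obtain ⟨Θ', h', hrel'⟩ := ih hrel₁
    exact ⟨Θ', .tau h₁ h', hrel'⟩
  | act h _ ih =>
    obtain ⟨Θ₁, h₁, hrel₁⟩ := h.lift_mergedInto hrel
    obtain ⟨Θ', h', hrel'⟩ := ih hrel₁
    exact ⟨Θ', .act h₁ h', hrel'⟩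

def Covered (Sig : Session R M V) (B : Buffer R M) (Θ : Session R M V) : Prop :=
  ∃ Δ, Reachable Sig B Δ ∧ ∀ r, MergedInto (Δ r) (Θ r)

theorem Covered.step (hl : Live Sig) (h : Covered Sig B Θ) (hs : Step B Θ κ B' Θ') :
    Covered Sig B' Θ' := by
  obtain ⟨Δ, hr, hrel⟩ := h
  cases hs with
  | output _ hco hB hoth =>
    obtain ⟨T', hT', hm⟩ := (hrel _).canOut_of_merge hco
    exact ⟨_, hr.step (.output _ hT' hB hoth), forall_update₂ (fun r _ => hrel r) hm⟩
  | input α _ hci hcons hoth =>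
    rcases (hrel _).canIn_of_merge hci with ⟨T', hT', hm⟩ | hc
    · exact ⟨_, hr.step (.input α _ hT' hcons hoth), forall_update₂ (fun r _ => hrel r) hm⟩
    · exact absurd hc (hl.not_compatIn hr fun u hu => ⟨_, hcons u hu⟩)

theorem Covered.exists_steps_ended (hl : Live Sig) (h : Covered Sig B Θ) :
    ∃ ψ Θf, Steps B Θ ψ emptyBuf Θf ∧ Ended Θf := by
  obtain ⟨Δ, ⟨φ, hφ⟩, hrel⟩ := h
  obtain ⟨ψ, Δf, hψ, hend⟩ := hl φ B Δ hφ
  obtain ⟨Θf, hΘf, hrelf⟩ := hψ.lift_mergedInto hrel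
  exact ⟨ψ, Θf, hΘf, fun r => (hend r ▸ hrelf r).eq_done⟩

def JointlyCovered (p : R) (T₁ T₂ : PST R M V) (Sig₁ Sig₂ : Session R M V) (B : Buffer R M)
    (Θ : Session R M V) : Prop :=
  ∃ Δ₁ Δ₂, Reachable Sig₁ B Δ₁ ∧ Reachable Sig₂ B Δ₂ ∧
    Δ₁ p = T₁ ∧ Δ₂ p = T₂ ∧ Θ p = PST.ichoice T₁ T₂ ∧
    ∀ r ≠ p, MergeST (Δ₁ r) (Δ₂ r) (Θ r)

variable {p : R} {T₁ T₂ : PST R M V} {Sig₁ Sig₂ : Session R M V}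

theorem JointlyCovered.covered_of_canOut {q : R} {b : M} {U' : PST R M V}
    (h : JointlyCovered p T₁ T₂ Sig₁ Sig₂ B Θ) (hco : CanOut (PST.ichoice T₁ T₂) q b U')
    (hB : B' p q = B p q ++ [b]) (hoth : ∀ s r, ¬(s = p ∧ r = q) → B' s r = B s r) :
    Covered Sig₁ B' (Function.update Θ p U') ∨ Covered Sig₂ B' (Function.update Θ p U') := by
  obtain ⟨Δ₁, Δ₂, hr₁, hr₂, rfl, rfl, -, hrel⟩ := h
  cases hco with
  | left hco =>
    exact .inl ⟨_, hr₁.step (.output _ hco hB hoth),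
      forall_update₂ (fun r hr => (hrel r hr).mergedInto) (.refl U')⟩
  | right hco =>
    exact .inr ⟨_, hr₂.step (.output _ hco hB hoth),
      forall_update₂ (fun r hr => (hrel r hr).symm.mergedInto) (.refl U')⟩

theorem JointlyCovered.step (hl₁ : Live Sig₁) (hl₂ : Live Sig₂)
    (h : JointlyCovered p T₁ T₂ Sig₁ Sig₂ B Θ) (hs : Step B Θ κ B' Θ') :
    JointlyCovered p T₁ T₂ Sig₁ Sig₂ B' Θ' ∨ Covered Sig₁ B' Θ' ∨ Covered Sig₂ B' Θ' := by
  have ⟨Δ₁, Δ₂, hr₁, hr₂, h₁p, h₂p, hΘp, hrel⟩ := h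
  cases hs with
  | @output r q b U' _ hco hB hoth =>
    rcases eq_or_ne r p with rfl | hrp
    · exact .inr (h.covered_of_canOut (hΘp ▸ hco) hB hoth)
    · obtain ⟨T', S', hT', hS', hm⟩ := (hrel r hrp).canOut_of_merge hco
      refine .inl ⟨_, _, hr₁.step (.output _ hT' hB hoth), hr₂.step (.output _ hS' hB hoth),
        ?_, ?_, ?_, forall_update₃ (P := fun r T S U => r ≠ p → MergeST T S U)
          (fun r _ => hrel r) (fun _ => hm)⟩ <;> simpa [hrp.symm]
  | input α _ hci hcons hoth =>
    have hrp : α.receiver ≠ p := by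
      rintro hrp
      rw [hrp, hΘp] at hci
      cases hci
    have hB : ∀ u ∈ α.senders, ∃ w, B u α.receiver = α.msg :: w := fun u hu => ⟨_, hcons u hu⟩
    rcases (hrel _ hrp).canIn_of_merge hci with ⟨T', S', hT', hS', hm⟩ | ⟨-, hc⟩ | ⟨-, hc⟩
    · refine .inl ⟨_, _, hr₁.step (.input α _ hT' hcons hoth),
        hr₂.step (.input α _ hS' hcons hoth), ?_, ?_, ?_,
        forall_update₃ (P := fun r T S U => r ≠ p → MergeST T S U)
          (fun r _ => hrel r) (fun _ => hm)⟩ <;> simpa [hrp.symm]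
    · exact absurd hc (hl₂.not_compatIn hr₂ hB)
    · exact absurd hc (hl₁.not_compatIn hr₁ hB)

theorem JointlyCovered.exists_steps_ended (hl₁ : Live Sig₁) (hl₂ : Live Sig₂)
    (hout : ∃ q b U, CanOut (PST.ichoice T₁ T₂) q b U)
    (h : JointlyCovered p T₁ T₂ Sig₁ Sig₂ B Θ) : ∃ ψ Θf, Steps B Θ ψ emptyBuf Θf ∧ Ended Θf := by
  -- `p` chooses first, which commits the run to one of the two sessions
  obtain ⟨q, b, U', hco⟩ := hout
  obtain ⟨B', hB, hoth⟩ : ∃ B' : Buffer R M,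
      B' p q = B p q ++ [b] ∧ ∀ s r, ¬(s = p ∧ r = q) → B' s r = B s r :=
    ⟨fun s r => if s = p ∧ r = q then B p q ++ [b] else B s r, by simp, fun s r h => by simp [h]⟩
  have hs : Step B Θ none B' (Function.update Θ p U') := by
    obtain ⟨-, -, -, -, -, -, hΘp, -⟩ := h
    exact .output _ (hΘp ▸ hco) hB hoth
  obtain ⟨ψ, Θf, hψ, hend⟩ := (h.covered_of_canOut hco hB hoth).elim
    (·.exists_steps_ended hl₁) (·.exists_steps_ended hl₂)
  exact ⟨ψ, Θf, .tau hs hψ, hend⟩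

theorem live_of_jointlyCovered (hl₁ : Live Sig₁) (hl₂ : Live Sig₂)
    (hout : ∃ q b U, CanOut (PST.ichoice T₁ T₂) q b U)
    (h : JointlyCovered p T₁ T₂ Sig₁ Sig₂ emptyBuf Θ) : Live Θ := by
  let Inv B Θ := JointlyCovered p T₁ T₂ Sig₁ Sig₂ B Θ ∨ Covered Sig₁ B Θ ∨ Covered Sig₂ B Θ
  have hstep {B Θ κ B' Θ'} (hs : Step B Θ κ B' Θ') : Inv B Θ → Inv B' Θ'
    | .inl h => h.step hl₁ hl₂ hs
    | .inr (.inl h) => .inr (.inl (h.step hl₁ hs))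
    | .inr (.inr h) => .inr (.inr (h.step hl₂ hs))
  have hsteps {B Θ φ B' Θ'} (hs : Steps B Θ φ B' Θ') : Inv B Θ → Inv B' Θ' := by
    induction hs with
    | refl => exact id
    | tau h _ ih | act h _ ih => exact ih ∘ hstep h
  intro φ B Θ' hφ
  rcases hsteps hφ (.inl h) with hJ | hC | hC
  · exact hJ.exists_steps_ended hl₁ hl₂ hout
  · exact hC.exists_steps_ended hl₁
  · exact hC.exists_steps_ended hl₂

end Runs

theorem merge_of_live_sessions_is_live_general
    {R M V : Type} [DecidableEq R] [DecidableEq V]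
    (p : R) (T₁ T₂ : PST R M V) (Δ₁ Δ₂ Δm : Session R M V)
    (hT : IsST (PST.ichoice T₁ T₂))
    (hlive₁ : Live (Function.update Δ₁ p T₁))
    (hlive₂ : Live (Function.update Δ₂ p T₂))
    (hmerge : ∀ q, q ≠ p → MergeST (Δ₁ q) (Δ₂ q) (Δm q)) :
    Live (Function.update Δm p (PST.ichoice T₁ T₂)) := by
  refine live_of_jointlyCovered (p := p) hlive₁ hlive₂ hT.exists_canOut_ichoice
    ⟨_, _, .refl _, .refl _, by simp, by simp, by simp,
      fun r hr => by simpa [hr] using hmerge r hr⟩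

/-- liveness of the merge of two live sessions:
if `{p:T₁} ⊎ Δ₁` and `{p:T₂} ⊎ Δ₂` are live and `Δ₁ ⋈ Δ₂` is defined (with result `Δm`),
then `{p : T₁ ⊕ T₂} ⊎ (Δ₁ ⋈ Δ₂)` is live. -/
theorem merge_of_live_sessions_is_live
    {R M V : Type} [DecidableEq R] [DecidableEq V]
    (p : R) (T₁ T₂ : PST R M V) (Δ₁ Δ₂ Δm : Session R M V)
    (hT₁ : IsST T₁) (hT₂ : IsST T₂) (hT : IsST (PST.ichoice T₁ T₂))
    (hst₁ : ∀ q, IsST (Δ₁ q)) (hfin₁ : FinDom Δ₁) (hp₁ : Δ₁ p = PST.done)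
    (hst₂ : ∀ q, IsST (Δ₂ q)) (hfin₂ : FinDom Δ₂) (hp₂ : Δ₂ p = PST.done)
    (hdom : ∀ q, Δ₁ q = PST.done ↔ Δ₂ q = PST.done)
    (hlive₁ : Live (Function.update Δ₁ p T₁))
    (hlive₂ : Live (Function.update Δ₂ p T₂))
    (hmerge : ∀ q, q ≠ p → MergeST (Δ₁ q) (Δ₂ q) (Δm q)) :
    Live (Function.update Δm p (PST.ichoice T₁ T₂)) :=
  merge_of_live_sessions_is_live_general p T₁ T₂ Δ₁ Δ₂ Δm hT hlive₁ hlive₂ hmerge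

end MultiPartySessions
end

section
/- (Lemma on well-formed closure and concatenation.) For all languages L1 and L2 of traces, closure(L1 · closure(L2)) = closure(L1 · L2). -/
namespace MultiPartySessions

variable {R M V : Type*}

lemma subset_closure' (L : Lang R M) : L ⊆ closure L :=
  fun w hw K hLK _ => hLK hw

lemma closure_min {L K : Lang R M} (hLK : L ⊆ K) (hK : WellFormedL K) :
    closure L ⊆ K := fun _ hw => hw K hLK hK

lemma closure_wf (L : Lang R M) : WellFormedL (closure L) := by
  intro φ ψ α β h
  by_cases hc : (α.receiver ∈ β.senders ∨ α.receiver = β.receiver)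
  · exact Or.inl hc
  · refine Or.inr (fun K hLK hK => ?_)
    rcases hK φ ψ α β (h K hLK hK) with hc' | h'
    · exact absurd hc' hc
    · exact h'

/-- `closure(L₁ · closure(L₂)) = closure(L₁ · L₂)`. -/
theorem closure_cat_closure
    {R M : Type} (L₁ L₂ : Lang R M) :
    closure (catL L₁ (closure L₂)) = closure (catL L₁ L₂) := by
  apply Set.Subset.antisymm
  · apply closure_min _ (closure_wf _)
    rintro w ⟨v₁, hv₁, v₂, hv₂, rfl⟩
    -- show v₁ ++ v₂ ∈ closure (catL L₁ L₂) for v₂ ∈ closure L₂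
    refine hv₂ {u | v₁ ++ u ∈ closure (catL L₁ L₂)} ?_ ?_
    · intro u hu
      exact subset_closure' _ ⟨v₁, hv₁, u, hu, rfl⟩
    · intro φ ψ α β h
      have h' := closure_wf (catL L₁ L₂) (v₁ ++ φ) ψ α β
        (by simpa [List.append_assoc] using h)
      rcases h' with hc | h'
      · exact Or.inl hc
      · exact Or.inr (by simpa [List.append_assoc] using h')
  · apply closure_min _ (closure_wf _)
    rintro w ⟨v₁, hv₁, v₂, hv₂, rfl⟩
    exact subset_closure' _ ⟨v₁, hv₁, v₂, subset_closure' _ hv₂, rfl⟩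

end MultiPartySessions
end
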